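/- (Reduction of the search interval.) Let n > 0, x_B > 0 and 0 < Γ_B < Γ_A, and set D = 1 + (Γ_B/Γ_A)^{1/n}. Then 1 < D < 2, so that x_B/2 < x_B/D < x_B and the interval (x_B/D, x_B/2] is empty; moreover, for every x ∈ (x_B/2, x_B/D] and every Γ_R > 0, min{log₂(1+Γ_A·x^{−n}), log₂(1+Γ_B·(x_B−x)^{−n})} = log₂(1+Γ_B·(x_B−x)^{−n}) and min{log₂(1+Γ_R·x^{−n}), log₂(1+Γ_R·(x_B−x)^{−n})} = log₂(1+Γ_R·x^{−n}), so the overall PNC-B rate on this interval equals R_{BR}(x)·R_{RA}(x)/(R_{BR}(x)+R_{RA}(x)) with R_{BR}(x) = log₂(1+Γ_B·(x_B−x)^{−n}) and R_{RA}(x) = log₂(1+Γ_R·x^{−n}). -/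

import Mathlib

/-!
Since `0 < Γ_B / Γ_A < 1`, its `n`-th root `r = D - 1` lies in `(0, 1)`. For a relay at
`x ≤ x_B / D` one has `r x ≤ x_B - x`, and raising to the power `-n` turns this into
`Γ_B (x_B - x)^{-n} ≤ Γ_A x^{-n}`: the user link is the weaker multiple-access link. For
`x > x_B / 2` the relay is closer to B than to A, so the link to A is the weaker broadcast link.
-/

open Real Set

lemma mul_rpow_neg_le_of_rpow_mul_le {n a b x y : ℝ} (hn : 0 < n) (ha : 0 < a) (hb : 0 < b)
    (hx : 0 < x) (h : (b / a) ^ (1 / n) * x ≤ y) : b * y ^ (-n) ≤ a * x ^ (-n) := by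
  have hq : 0 < b / a := div_pos hb ha
  have hr : ((b / a) ^ (1 / n)) ^ (-n) = a / b := by
    rw [← rpow_mul hq.le, one_div_mul_eq_div, neg_div_self hn.ne', rpow_neg_one, inv_div]
  have hy : y ^ (-n) ≤ a / b * x ^ (-n) := by
    calc y ^ (-n) ≤ ((b / a) ^ (1 / n) * x) ^ (-n) :=
          rpow_le_rpow_of_nonpos (by positivity) h (by linarith)
      _ = a / b * x ^ (-n) := by rw [mul_rpow (by positivity) hx.le, hr]
  calc b * y ^ (-n) ≤ b * (a / b * x ^ (-n)) := mul_le_mul_of_nonneg_left hy hb.le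
    _ = a * x ^ (-n) := by field_simp

lemma logb_two_one_add_le {u v : ℝ} (hu : 0 ≤ u) (h : u ≤ v) :
    logb 2 (1 + u) ≤ logb 2 (1 + v) :=
  logb_le_logb_of_le one_lt_two (by linarith) (by linarith)

lemma div_two_lt_div_and_div_lt_self {a D : ℝ} (ha : 0 < a) (h1 : 1 < D) (h2 : D < 2) :
    a / 2 < a / D ∧ a / D < a :=
  ⟨div_lt_div_of_pos_left ha (by linarith) h2, div_lt_self ha h1⟩

lemma sub_lt_self_and_mul_le_sub_of_mem_Ioc {a D x : ℝ} (hD : 0 < D)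
    (hx : x ∈ Ioc (a / 2) (a / D)) : a - x < x ∧ (D - 1) * x ≤ a - x := by
  obtain ⟨hx1, hx2⟩ := hx
  have : D * x ≤ a := (le_div_iff₀' hD).mp hx2
  constructor <;> linarith

/-- Reduction of the relay search interval: with `0 < Γ_B < Γ_A` and
`D = 1 + (Γ_B/Γ_A)^{1/n}`, one has `1 < D < 2`, hence `x_B/2 < x_B/D < x_B`
and `(x_B/D, x_B/2]` is empty; and on `(x_B/2, x_B/D]` the multiple-access
minimum is the user link rate, the broadcast minimum is the relay→A rate,
and the overall PNC-B rate equals `R_BR·R_RA/(R_BR+R_RA)`. -/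
theorem pncb_search_interval_reduction (n xB ΓA ΓB D : ℝ) (hn : 0 < n)
    (hxB : 0 < xB) (hΓB : 0 < ΓB) (hBA : ΓB < ΓA)
    (hD : D = 1 + (ΓB / ΓA) ^ (1 / n)) :
    (1 < D ∧ D < 2) ∧
    (xB / 2 < xB / D ∧ xB / D < xB) ∧
    Set.Ioc (xB / D) (xB / 2) = (∅ : Set ℝ) ∧
    (∀ x ∈ Set.Ioc (xB / 2) (xB / D), ∀ ΓR : ℝ, 0 < ΓR →
      min (Real.logb 2 (1 + ΓA * x ^ (-n))) (Real.logb 2 (1 + ΓB * (xB - x) ^ (-n)))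
        = Real.logb 2 (1 + ΓB * (xB - x) ^ (-n)) ∧
      min (Real.logb 2 (1 + ΓR * x ^ (-n))) (Real.logb 2 (1 + ΓR * (xB - x) ^ (-n)))
        = Real.logb 2 (1 + ΓR * x ^ (-n)) ∧
      min (Real.logb 2 (1 + ΓA * x ^ (-n))) (Real.logb 2 (1 + ΓB * (xB - x) ^ (-n))) *
          min (Real.logb 2 (1 + ΓR * x ^ (-n))) (Real.logb 2 (1 + ΓR * (xB - x) ^ (-n))) /
          (min (Real.logb 2 (1 + ΓA * x ^ (-n))) (Real.logb 2 (1 + ΓB * (xB - x) ^ (-n))) +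
            min (Real.logb 2 (1 + ΓR * x ^ (-n))) (Real.logb 2 (1 + ΓR * (xB - x) ^ (-n))))
        = Real.logb 2 (1 + ΓB * (xB - x) ^ (-n)) * Real.logb 2 (1 + ΓR * x ^ (-n)) /
          (Real.logb 2 (1 + ΓB * (xB - x) ^ (-n)) + Real.logb 2 (1 + ΓR * x ^ (-n)))) := by
  have hΓA : 0 < ΓA := hΓB.trans hBA
  have hq : 0 < ΓB / ΓA := div_pos hΓB hΓA
  have hr0 : 0 < (ΓB / ΓA) ^ (1 / n) := rpow_pos_of_pos hq _
  have hr1 : (ΓB / ΓA) ^ (1 / n) < 1 :=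
    rpow_lt_one hq.le ((div_lt_one hΓA).mpr hBA) (by positivity)
  have hD1 : 1 < D := by linarith
  have hD2 : D < 2 := by linarith
  obtain ⟨hhalf, hlt⟩ := div_two_lt_div_and_div_lt_self hxB hD1 hD2
  refine ⟨⟨hD1, hD2⟩, ⟨hhalf, hlt⟩, Ioc_eq_empty hhalf.not_gt, fun x hx ΓR hΓR => ?_⟩
  have hx0 : 0 < x := (half_pos hxB).trans hx.1
  obtain ⟨hsub, hmul⟩ := sub_lt_self_and_mul_le_sub_of_mem_Ioc (by linarith) hx
  have hsub0 : 0 < xB - x := by nlinarith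
  have hMA : min (logb 2 (1 + ΓA * x ^ (-n))) (logb 2 (1 + ΓB * (xB - x) ^ (-n)))
      = logb 2 (1 + ΓB * (xB - x) ^ (-n)) :=
    min_eq_right <| logb_two_one_add_le (by positivity) <|
      mul_rpow_neg_le_of_rpow_mul_le hn hΓA hΓB hx0 (by rw [hD] at hmul; linarith)
  have hBC : min (logb 2 (1 + ΓR * x ^ (-n))) (logb 2 (1 + ΓR * (xB - x) ^ (-n)))
      = logb 2 (1 + ΓR * x ^ (-n)) :=
    min_eq_left <| logb_two_one_add_le (by positivity) <| mul_le_mul_of_nonneg_left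
      (rpow_le_rpow_of_nonpos hsub0 hsub.le (by linarith)) hΓR.le
  exact ⟨hMA, hBC, by rw [hMA, hBC]⟩
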